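/- arXiv:math/0212082 — 2 statements merged into one kernel-verified Lean document; each statement's English description precedes it below -/
import Mathlib

section
/- Let a, b : 𝔻 → ℂ be holomorphic functions on the unit disc with a(0) = 1, b(0) = 0, suppose |a(s)|² − |b(s)|² > 0 for all s, and suppose log(|a(s)|² − |b(s)|²) is a harmonic function of s. Then b ≡ 0. -/
open Metric

/-- Key analytic lemma of Proposition 1: if `a, b` are holomorphic on the unit
disc with `a(0) = 1`, `b(0) = 0`, `|a|² − |b|² > 0`, and `log(|a|² − |b|²)` is
harmonic (i.e. the real part of a holomorphic function on the disc), then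
`b ≡ 0`. -/
theorem stmt_14 (a b : ℂ → ℂ)
    (ha : DifferentiableOn ℂ a (ball (0 : ℂ) 1))
    (hb : DifferentiableOn ℂ b (ball (0 : ℂ) 1))
    (ha0 : a 0 = 1) (hb0 : b 0 = 0)
    (hpos : ∀ s ∈ ball (0 : ℂ) 1, 0 < ‖a s‖ ^ 2 - ‖b s‖ ^ 2)
    (hharm : ∃ g : ℂ → ℂ, DifferentiableOn ℂ g (ball (0 : ℂ) 1) ∧
      ∀ s ∈ ball (0 : ℂ) 1,
        (g s).re = Real.log (‖a s‖ ^ 2 - ‖b s‖ ^ 2)) :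
    ∀ s ∈ ball (0 : ℂ) 1, b s = 0 := by
  obtain ⟨g, hg, hgre⟩ := hharm
  have haz : ∀ s ∈ ball (0 : ℂ) 1, a s ≠ 0 := by
    intro s hs hz
    have h := hpos s hs
    rw [hz] at h
    simp at h
    nlinarith [sq_nonneg (‖b s‖)]
  set φ : ℂ → ℂ := fun s => Complex.exp (g s) / (a s) ^ 2 with hφdef
  have hdφ : DifferentiableOn ℂ φ (ball 0 1) :=
    (hg.cexp).div (ha.pow 2) (fun s hs => pow_ne_zero 2 (haz s hs))
  have hnorm : ∀ s ∈ ball (0 : ℂ) 1,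
      ‖φ s‖ = (‖a s‖ ^ 2 - ‖b s‖ ^ 2) / ‖a s‖ ^ 2 := by
    intro s hs
    simp only [hφdef, norm_div, norm_pow, Complex.norm_exp, hgre s hs, map_pow]
    rw [Real.exp_log (hpos s hs)]
  have h0 : (0 : ℂ) ∈ ball (0 : ℂ) 1 := by simp
  have hφ0 : ‖φ 0‖ = 1 := by
    rw [hnorm 0 h0, ha0, hb0]
    simp
  have hmax : IsMaxOn (norm ∘ φ) (ball (0 : ℂ) 1) 0 := by
    intro s hs
    have hA : 0 < ‖a s‖ ^ 2 := by
      have := hpos s hs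
      nlinarith [sq_nonneg (‖b s‖)]
    have hB := sq_nonneg (‖b s‖)
    simp only [Function.comp, Set.mem_setOf_eq, hφ0, hnorm s hs]
    rw [div_le_one hA]
    linarith
  have heq := Complex.eqOn_of_isPreconnected_of_isMaxOn_norm
    (convex_ball (0 : ℂ) 1).isPreconnected isOpen_ball hdφ h0 hmax
  intro s hs
  have hn : ‖φ s‖ = 1 := by
    rw [heq hs]
    simpa using hφ0
  rw [hnorm s hs] at hn
  have hA : 0 < ‖a s‖ ^ 2 := by
    have := hpos s hs
    nlinarith [sq_nonneg (‖b s‖)]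
  field_simp at hn
  rw [div_eq_one_iff_eq hA.ne'] at hn
  have h2 : ‖b s‖ ^ 2 = 0 := by linarith
  simpa using h2
end

section
/- Let D = Σ a_j C_j be an effective ℚ-divisor on a projective surface such that the intersection matrix (C_i·C_j) is negative definite, and let P be a nef ℚ-divisor class with P·C_j = 0 for all j. Then the decomposition L = P + D is unique: if L = P' + D' is another such decomposition (P' nef, D' effective with negative definite support, P'·C'_j = 0 for all components C'_j of D'), then P ≡ P' numerically and D = D'. -/
private lemma bilin_sum_sum {V : Type*} [AddCommGroup V] [Module ℚ V]
    (B : LinearMap.BilinForm ℚ V) {ι κ : Type*} (s : Finset ι) (t : Finset κ)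
    (g : ι → ℚ) (h : κ → ℚ) (u : ι → V) (w : κ → V) :
    B (∑ i ∈ s, g i • u i) (∑ j ∈ t, h j • w j)
      = ∑ i ∈ s, ∑ j ∈ t, g i * h j * B (u i) (w j) := by
  simp only [map_sum, map_smul, LinearMap.sum_apply, LinearMap.smul_apply,
    smul_eq_mul, Finset.mul_sum, mul_assoc]
  rw [Finset.sum_comm]
  exact Finset.sum_congr rfl fun i _ => Finset.sum_congr rfl fun j _ => by ring

private lemma nd_inj {V : Type*} [AddCommGroup V] [Module ℚ V]
    (B : LinearMap.BilinForm ℚ V) {n : ℕ} (C : Fin n → V)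
    (hnd : ∀ x : Fin n → ℚ, x ≠ 0 → ∑ i, ∑ j, x i * x j * B (C i) (C j) < 0) :
    Function.Injective C := by
  intro i j hij
  by_contra hne
  set x : Fin n → ℚ := Pi.single i (1:ℚ) - Pi.single j 1 with hxdef
  have hx : x ≠ 0 := by
    intro h
    have := congrFun h i
    simp [hxdef, Pi.single_apply, Ne.symm hne] at this
  have hsum : ∑ k, x k • C k = 0 := by
    have : ∑ k, x k • C k = C i - C j := by
      simp [hxdef, sub_smul, Finset.sum_sub_distrib, Pi.single_apply, ite_smul]
    rw [this, hij, sub_self]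
  have h0 : ∑ k, ∑ l, x k * x l * B (C k) (C l) = 0 := by
    rw [← bilin_sum_sum B Finset.univ Finset.univ x x C C, hsum]
    simp
  have := hnd x hx
  rw [h0] at this
  exact lt_irrefl 0 this

private lemma zariski_aux {V : Type*} [AddCommGroup V] [Module ℚ V]
    (B : LinearMap.BilinForm ℚ V) (hsymm : ∀ x y : V, B x y = B y x)
    (Curves : Set V) (hpair : ∀ x ∈ Curves, ∀ y ∈ Curves, x ≠ y → 0 ≤ B x y)
    {n : ℕ} (C : Fin n → V) (hC : ∀ i, C i ∈ Curves)
    (hnd : ∀ x : Fin n → ℚ, x ≠ 0 → ∑ i, ∑ j, x i * x j * B (C i) (C j) < 0)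
    (P P' : V) (hP'nef : ∀ Γ ∈ Curves, 0 ≤ B P' Γ) (hPC : ∀ i, B P (C i) = 0)
    (S : Finset V) (hS : ∀ v ∈ S, v ∈ Curves) (hCS : ∀ i, C i ∈ S)
    (f : V → ℚ) (hsupp : ∀ v ∈ S, 0 < f v → ∃ i, C i = v)
    (hE : ∑ v ∈ S, f v • v = P' - P) :
    ∀ v ∈ S, f v ≤ 0 := by
  classical
  have hCinj : Function.Injective C := nd_inj B C hnd
  set fp : V → ℚ := fun v => max (f v) 0 with hfp
  set fm : V → ℚ := fun v => max (-(f v)) 0 with hfm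
  have hfpnn : ∀ v, 0 ≤ fp v := fun v => le_max_right _ _
  have hfmnn : ∀ v, 0 ≤ fm v := fun v => le_max_right _ _
  have hfsplit : ∀ v, f v = fp v - fm v := by
    intro v
    rcases le_or_gt (f v) 0 with h | h
    · simp [hfp, hfm, max_eq_right h, max_eq_left (neg_nonneg.mpr h)]
    · simp [hfp, hfm, max_eq_left h.le, max_eq_right (neg_nonpos.mpr h.le)]
  set Ep : V := ∑ v ∈ S, fp v • v with hEp
  set Em : V := ∑ v ∈ S, fm v • v with hEm
  have hEpm : Ep - Em = P' - P := by
    rw [← hE, hEp, hEm, ← Finset.sum_sub_distrib]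
    congr 1; ext v; rw [hfsplit v, sub_smul]
  have hfpsupp : ∀ v ∈ S, fp v ≠ 0 → ∃ i, C i = v := by
    intro v hv hne
    have : 0 < f v := by
      by_contra h
      push_neg at h
      exact hne (by simp [hfp, max_eq_right h])
    exact hsupp v hv this
  have h1 : 0 ≤ B Ep Em := by
    rw [hEp, hEm, bilin_sum_sum]
    apply Finset.sum_nonneg; intro v hv
    apply Finset.sum_nonneg; intro w hw
    rcases eq_or_ne v w with rfl | hne
    · rcases le_or_gt (f v) 0 with h | h
      · have : fp v = 0 := by simp [hfp, max_eq_right h]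
        simp [this]
      · have : fm v = 0 := by simp [hfm, max_eq_right (neg_nonpos.mpr h.le)]
        simp [this]
    · exact mul_nonneg (mul_nonneg (hfpnn v) (hfmnn w)) (hpair v (hS v hv) w (hS w hw) hne)
  have h2 : 0 ≤ B Ep P' := by
    rw [hEp, map_sum, LinearMap.sum_apply]
    apply Finset.sum_nonneg; intro v hv
    rw [map_smul, LinearMap.smul_apply, smul_eq_mul]
    rw [hsymm v P']
    exact mul_nonneg (hfpnn v) (hP'nef v (hS v hv))
  have h3 : B Ep P = 0 := by
    rw [hEp, map_sum, LinearMap.sum_apply]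
    apply Finset.sum_eq_zero; intro v hv
    rw [map_smul, LinearMap.smul_apply, smul_eq_mul]
    rcases eq_or_ne (fp v) 0 with h | h
    · rw [h, zero_mul]
    · obtain ⟨i, rfl⟩ := hfpsupp v hv h
      rw [hsymm, hPC i, mul_zero]
  have h5 : 0 ≤ B Ep Ep := by
    have key : B Ep Ep = B Ep (P' - P) + B Ep Em := by
      rw [← hEpm, map_sub]; ring
    rw [key, map_sub]
    linarith
  have himg : Finset.image C Finset.univ ⊆ S := by
    intro v hv
    obtain ⟨i, _, rfl⟩ := Finset.mem_image.mp hv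
    exact hCS i
  have h6 : Ep = ∑ i, fp (C i) • C i := by
    rw [hEp, ← Finset.sum_subset himg (fun v hv hnv => ?_),
      Finset.sum_image (fun i _ j _ h => hCinj h)]
    rcases eq_or_ne (fp v) 0 with h | h
    · rw [h, zero_smul]
    · obtain ⟨i, rfl⟩ := hfpsupp v hv h
      exact absurd (Finset.mem_image_of_mem C (Finset.mem_univ i)) hnv
  have h7 : B Ep Ep = ∑ i, ∑ j, fp (C i) * fp (C j) * B (C i) (C j) := by
    rw [h6, bilin_sum_sum]
  have h8 : ∀ i, fp (C i) = 0 := by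
    by_contra h
    push_neg at h
    obtain ⟨i, hi⟩ := h
    have hx : (fun i => fp (C i)) ≠ 0 := fun h0 => hi (congrFun h0 i)
    have := hnd _ hx
    rw [← h7] at this
    linarith
  intro v hv
  by_contra h
  push_neg at h
  obtain ⟨i, rfl⟩ := hsupp v hv h
  have := h8 i
  rw [hfp] at this
  simp only [max_eq_left h.le] at this
  exact absurd this (ne_of_gt h)

/-- Uniqueness of the Zariski decomposition (Zariski–Fujita), stated on the
Néron–Severi `ℚ`-vector space `V` with intersection form `B`.  `Curves` is the
set of classes of irreducible curves (distinct curves meet nonnegatively);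
`P` is nef, `D = ∑ aⱼ • Cⱼ` is effective with negative definite support and
`P·Cⱼ = 0`, and similarly for `P'`, `D'`.  If `P + D = P' + D'` then `P = P'`
and `D = D'`. -/
theorem stmt_17 {V : Type*} [AddCommGroup V] [Module ℚ V]
    (B : LinearMap.BilinForm ℚ V) (hsymm : ∀ x y : V, B x y = B y x)
    (Curves : Set V)
    (hpair : ∀ x ∈ Curves, ∀ y ∈ Curves, x ≠ y → 0 ≤ B x y)
    {n n' : ℕ} (C : Fin n → V) (C' : Fin n' → V)
    (hC : ∀ i, C i ∈ Curves) (hC' : ∀ i, C' i ∈ Curves)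
    (a : Fin n → ℚ) (a' : Fin n' → ℚ)
    (ha : ∀ i, 0 ≤ a i) (ha' : ∀ i, 0 ≤ a' i)
    -- negative definiteness of the two supports
    (hnd : ∀ x : Fin n → ℚ, x ≠ 0 → ∑ i, ∑ j, x i * x j * B (C i) (C j) < 0)
    (hnd' : ∀ x : Fin n' → ℚ, x ≠ 0 → ∑ i, ∑ j, x i * x j * B (C' i) (C' j) < 0)
    -- `P` and `P'` are nef
    (P P' : V)
    (hPnef : ∀ Γ ∈ Curves, 0 ≤ B P Γ) (hP'nef : ∀ Γ ∈ Curves, 0 ≤ B P' Γ)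
    -- orthogonality of the positive part to the support of the negative part
    (hPC : ∀ i, B P (C i) = 0) (hP'C' : ∀ i, B P' (C' i) = 0)
    (L : V) (hL : L = P + ∑ i, a i • C i) (hL' : L = P' + ∑ i, a' i • C' i) :
    P = P' ∧ (∑ i, a i • C i) = ∑ i, a' i • C' i := by
  classical
  set S : Finset V := Finset.image C Finset.univ ∪ Finset.image C' Finset.univ with hSdef
  have hCS : ∀ i, C i ∈ S := fun i =>
    Finset.mem_union_left _ (Finset.mem_image_of_mem C (Finset.mem_univ i))
  have hC'S : ∀ i, C' i ∈ S := fun i =>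
    Finset.mem_union_right _ (Finset.mem_image_of_mem C' (Finset.mem_univ i))
  have hS : ∀ v ∈ S, v ∈ Curves := by
    intro v hv
    rcases Finset.mem_union.mp hv with h | h
    · obtain ⟨i, _, rfl⟩ := Finset.mem_image.mp h; exact hC i
    · obtain ⟨i, _, rfl⟩ := Finset.mem_image.mp h; exact hC' i
  set dD : V → ℚ := fun v => ∑ i, if C i = v then a i else 0 with hdD
  set dD' : V → ℚ := fun v => ∑ i, if C' i = v then a' i else 0 with hdD'
  have hdDnn : ∀ v, 0 ≤ dD v := by
    intro v; apply Finset.sum_nonneg; intro i _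
    split
    · exact ha i
    · exact le_rfl
  have hdD'nn : ∀ v, 0 ≤ dD' v := by
    intro v; apply Finset.sum_nonneg; intro i _
    split
    · exact ha' i
    · exact le_rfl
  have hcoeff : ∀ {m : ℕ} (D : Fin m → V) (b : Fin m → ℚ), (∀ i, D i ∈ S) →
      ∑ v ∈ S, (∑ i, if D i = v then b i else 0) • v = ∑ i, b i • D i := by
    intro m D b hDS
    simp_rw [Finset.sum_smul]
    rw [Finset.sum_comm]
    refine Finset.sum_congr rfl fun i _ => ?_
    rw [Finset.sum_eq_single (D i)]
    · simp
    · intro v _ hne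
      rw [if_neg (Ne.symm hne), zero_smul]
    · intro h; exact absurd (hDS i) h
  set f : V → ℚ := fun v => dD v - dD' v with hfdef
  have hPD : P + ∑ i, a i • C i = P' + ∑ i, a' i • C' i := hL.symm.trans hL'
  have hE : ∑ v ∈ S, f v • v = P' - P := by
    have h1 : ∑ v ∈ S, f v • v = (∑ i, a i • C i) - ∑ i, a' i • C' i := by
      simp_rw [hfdef, sub_smul]
      rw [Finset.sum_sub_distrib, hcoeff C a hCS, hcoeff C' a' hC'S]
    rw [h1, sub_eq_sub_iff_add_eq_add, add_comm _ P]
    exact hPD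
  have hsupp : ∀ v ∈ S, 0 < f v → ∃ i, C i = v := by
    intro v _ hf
    by_contra h
    push_neg at h
    have : dD v = 0 := Finset.sum_eq_zero fun i _ => if_neg (h i)
    rw [hfdef] at hf
    simp only at hf
    have := hdD'nn v
    rw [‹dD v = 0›] at hf
    linarith
  have hsupp' : ∀ v ∈ S, 0 < -f v → ∃ i, C' i = v := by
    intro v _ hf
    by_contra h
    push_neg at h
    have : dD' v = 0 := Finset.sum_eq_zero fun i _ => if_neg (h i)
    rw [hfdef] at hf
    simp only at hf
    have := hdDnn v
    rw [‹dD' v = 0›] at hf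
    linarith
  have hE' : ∑ v ∈ S, (-f v) • v = P - P' := by
    simp_rw [neg_smul]
    rw [Finset.sum_neg_distrib, hE, neg_sub]
  have haux1 := zariski_aux B hsymm Curves hpair C hC hnd P P' hP'nef hPC S hS hCS f hsupp hE
  have haux2 := zariski_aux B hsymm Curves hpair C' hC' hnd' P' P hPnef hP'C' S hS hC'S
    (fun v => -f v) hsupp' hE'
  have hf0 : ∀ v ∈ S, f v = 0 := by
    intro v hv
    have h1 := haux1 v hv
    have h2 := haux2 v hv
    linarith
  have hPP' : P = P' := by
    have : (0 : V) = P' - P := by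
      rw [← hE]
      exact (Finset.sum_eq_zero fun v hv => by rw [hf0 v hv, zero_smul]).symm
    have := this.symm
    rw [sub_eq_zero] at this
    exact this.symm
  refine ⟨hPP', ?_⟩
  rw [hPP'] at hPD
  exact add_left_cancel hPD
end
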